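/- arXiv:1712.04333 — 2 statements merged into one kernel-verified Lean document; each statement's English description precedes it below -/
import Mathlib

section
/- The function g(t) = ǧ₂ − ϑ − 2ϑ(ǧ₂ − ϑ)/(e^{ω(T−t)}(ǧ₂ + ϑ) − ǧ₂ + ϑ) is differentiable on [0,T] and solves the Riccati equation g'(t) − 2γ₂ g(t) + γ₁ g(t)² + γ₃ = 0 for every t ∈ [0,T], with the terminal condition g(T) = 0. -/
open Real MeasureTheory Set Filter

noncomputable section

/-- `γ₁ = σ²/(1-γ)`. -/
def gam1 (σ γ : ℝ) : ℝ := σ ^ 2 / (1 - γ)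

/-- `γ₂ = γκ₁/(1-γ) + κ` with `κ₁ = κ + r`. -/
def gam2 (κ σ r γ : ℝ) : ℝ := γ * (κ + r) / (1 - γ) + κ

/-- `γ₃ = γκ₁²/((1-γ)σ²)`. -/
def gam3 (κ σ r γ : ℝ) : ℝ := γ * (κ + r) ^ 2 / ((1 - γ) * σ ^ 2)

/-- `ǧ₂ = γ₂/γ₁`. -/
def gc2 (κ σ r γ : ℝ) : ℝ := gam2 κ σ r γ / gam1 σ γ

/-- `ǧ₃ = γ₃/γ₁`. -/
def gc3 (κ σ r γ : ℝ) : ℝ := gam3 κ σ r γ / gam1 σ γ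

/-- `ϑ = √(ǧ₂² − ǧ₃)`. -/
def theta (κ σ r γ : ℝ) : ℝ := Real.sqrt (gc2 κ σ r γ ^ 2 - gc3 κ σ r γ)

/-- The explicit solution `g(t)` of the Riccati equation; `ω = 2ϑγ₁`. -/
def gfun (κ σ r γ T t : ℝ) : ℝ :=
  gc2 κ σ r γ - theta κ σ r γ -
    2 * theta κ σ r γ * (gc2 κ σ r γ - theta κ σ r γ) /
      (Real.exp (2 * theta κ σ r γ * gam1 σ γ * (T - t)) * (gc2 κ σ r γ + theta κ σ r γ) -
        gc2 κ σ r γ + theta κ σ r γ)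

/-- `g₁(t) = γ₁ g(t) − γ₂`. -/
def g1fun (κ σ r γ T t : ℝ) : ℝ := gam1 σ γ * gfun κ σ r γ T t - gam2 κ σ r γ

/-- `μ(u,t) = exp(∫_t^u g₁(v) dv)`. -/
def mufun (κ σ r γ T u t : ℝ) : ℝ := Real.exp (∫ v in t..u, g1fun κ σ r γ T v)

/-- `σ₁(u,t) = √(σ² ∫_t^u μ(u,z)² dz)`. -/
def sig1fun (κ σ r γ T u t : ℝ) : ℝ :=
  Real.sqrt (σ ^ 2 * ∫ z in t..u, mufun κ σ r γ T u z ^ 2)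

/-- The Gaussian kernel `φ(s,t,z,u)`. -/
def phifun (κ σ r γ T s t z u : ℝ) : ℝ :=
  (Real.sqrt (2 * Real.pi) * sig1fun κ σ r γ T u t)⁻¹ *
    Real.exp (-(z - s * mufun κ σ r γ T u t) ^ 2 / (2 * sig1fun κ σ r γ T u t ^ 2))

/-- `G(s,t,y) = exp(−(s²g(t)/2 + y)/(1−γ))`. -/
def Gfun (κ σ r γ T s t y : ℝ) : ℝ :=
  Real.exp (-(s ^ 2 * gfun κ σ r γ T t / 2 + y) / (1 - γ))

/-- `Γ₀(s,t,y₁,y₂)`. -/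
def Gamma0 (κ σ r γ ϖ T s t y₁ y₂ : ℝ) : ℝ :=
  σ ^ 2 * y₂ ^ 2 / (2 * (1 - γ)) + σ ^ 2 * gfun κ σ r γ T t / 2 + r * γ +
    (1 - γ) * ϖ ^ (1 / (γ - 1)) * Gfun κ σ r γ T s t y₁

/-- `Ψ_h(s,t) = Γ₀(s,t,h(s,t),∂_s h(s,t))`. -/
def Psifun (κ σ r γ ϖ T : ℝ) (h : ℝ → ℝ → ℝ) (s t : ℝ) : ℝ :=
  Gamma0 κ σ r γ ϖ T s t (h s t) (deriv (fun s' => h s' t) s)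

/-- The Feynman–Kac mapping `ℒ_h(s,t) = ∫_t^T ∫_ℝ Ψ_h(z,u) φ(s,t,z,u) dz du`. -/
def FK (κ σ r γ ϖ T : ℝ) (h : ℝ → ℝ → ℝ) (s t : ℝ) : ℝ :=
  ∫ u in t..T, ∫ z : ℝ, Psifun κ σ r γ ϖ T h z u * phifun κ σ r γ T s t z u

/-- The bound `B₁`. -/
def Bb1 (σ γ ϖ T : ℝ) : ℝ :=
  (1 - γ) / σ ^ 2 *
    (Real.sqrt (Real.pi / (2 * T)) +
      Real.sqrt (|Real.pi - 4 * T * σ ^ 2 * ϖ ^ (1 / (γ - 1))| / (2 * T)))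

/-- The bound `B₀`. -/
def Bb0 (κ σ r γ ϖ T : ℝ) : ℝ :=
  (gfun κ σ r γ T 0 * σ ^ 2 / 2 + r * γ + (1 - γ) * ϖ ^ (1 / (γ - 1)) +
    gam1 σ γ / 2 * Bb1 σ γ ϖ T ^ 2) * T

/-- Membership in the space `𝒳`. -/
def MemX (κ σ r γ ϖ T : ℝ) (h : ℝ → ℝ → ℝ) : Prop :=
  ContinuousOn (fun p : ℝ × ℝ => h p.1 p.2) (Set.univ ×ˢ Set.Icc 0 T) ∧
  (∀ t ∈ Set.Icc (0 : ℝ) T, ∀ s : ℝ, DifferentiableAt ℝ (fun s' => h s' t) s) ∧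
  ContinuousOn (fun p : ℝ × ℝ => deriv (fun s' => h s' p.2) p.1) (Set.univ ×ˢ Set.Icc 0 T) ∧
  ∀ s : ℝ, ∀ t ∈ Set.Icc (0 : ℝ) T,
    0 ≤ h s t ∧ h s t ≤ Bb0 κ σ r γ ϖ T ∧ |deriv (fun s' => h s' t) s| ≤ Bb1 σ γ ϖ T

/-- The metric `ρ_κ̂` on `𝒳`. -/
def rhoX (T kh : ℝ) (f h : ℝ → ℝ → ℝ) : ℝ :=
  ⨆ p : ℝ × Set.Icc (0 : ℝ) T,
    Real.exp (-kh * (T - (p.2 : ℝ))) *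
      (|h p.1 (p.2 : ℝ) - f p.1 (p.2 : ℝ)| +
        |deriv (fun s' => h s' (p.2 : ℝ)) p.1 - deriv (fun s' => f s' (p.2 : ℝ)) p.1|)

/-- The Picard iterates `h₀ = 0`, `h_{n+1} = ℒ_{h_n}`. -/
def picard (κ σ r γ ϖ T : ℝ) : ℕ → ℝ → ℝ → ℝ
  | 0 => fun _ _ => 0
  | n + 1 => FK κ σ r γ ϖ T (picard κ σ r γ ϖ T n)

/-! The Riccati equation `R' = 2caR − cR² − c(a² − θ²) = −c(R − a − θ)(R − a + θ)` has the constant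
solutions `a ± θ`; substituting `R = a − θ + 1/u` linearises it, and the solution of the linear equation
vanishing at `T` gives the closed form `g`. For the model parameters `γ₁ > 0`, `ǧ₂ > 0` and
`ǧ₂² − ǧ₃ = (1 − γ)(κ² − γr²)/σ⁴ > 0`, so `ϑ > 0`, the denominator stays positive on `[0, T]`, and
`γ₂ = γ₁ǧ₂`, `γ₃ = γ₁(ǧ₂² − ϑ²)`. -/

section Riccati

variable (c a θ T : ℝ)

def riccatiDenom (t : ℝ) : ℝ :=
  Real.exp (2 * θ * c * (T - t)) * (a + θ) - a + θ

def riccatiSol (t : ℝ) : ℝ :=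
  a - θ - 2 * θ * (a - θ) / riccatiDenom c a θ T t

theorem gfun_eq_riccatiSol (κ σ r γ : ℝ) :
    gfun κ σ r γ T = riccatiSol (gam1 σ γ) (gc2 κ σ r γ) (theta κ σ r γ) T :=
  rfl

variable {c a θ T}

theorem hasDerivAt_riccatiDenom (t : ℝ) :
    HasDerivAt (riccatiDenom c a θ T)
      (Real.exp (2 * θ * c * (T - t)) * (2 * θ * c * -1) * (a + θ)) t := by
  have hlin : HasDerivAt (fun t' => 2 * θ * c * (T - t')) (2 * θ * c * -1) t := by
    simpa using ((hasDerivAt_id t).const_sub T).const_mul (2 * θ * c)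
  exact ((hlin.exp.mul_const (a + θ)).sub_const a).add_const θ

theorem hasDerivAt_riccatiSol {t : ℝ} (hD : riccatiDenom c a θ T t ≠ 0) :
    HasDerivAt (riccatiSol c a θ T)
      (2 * (c * a) * riccatiSol c a θ T t - c * riccatiSol c a θ T t ^ 2 -
        c * (a ^ 2 - θ ^ 2)) t := by
  refine (((hasDerivAt_const t (2 * θ * (a - θ))).div (hasDerivAt_riccatiDenom t) hD).const_sub
    (a - θ)).congr_deriv ?_
  unfold riccatiSol
  unfold riccatiDenom at hD ⊢
  generalize Real.exp (2 * θ * c * (T - t)) = E at hD ⊢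
  field_simp
  ring

theorem riccatiSol_self (hθ : θ ≠ 0) : riccatiSol c a θ T T = 0 := by
  have hD : riccatiDenom c a θ T T = 2 * θ := by
    simp only [riccatiDenom, sub_self, mul_zero, Real.exp_zero, one_mul]
    ring
  rw [riccatiSol, hD]
  field_simp
  ring

theorem riccatiDenom_pos (hc : 0 ≤ c) (hθ : 0 < θ) (haθ : 0 ≤ a + θ) {t : ℝ} (ht : t ≤ T) :
    0 < riccatiDenom c a θ T t := by
  have hE : 1 ≤ Real.exp (2 * θ * c * (T - t)) :=
    Real.one_le_exp (by have := sub_nonneg.mpr ht; positivity)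
  unfold riccatiDenom
  nlinarith

end Riccati

section Parameters

variable {κ σ r γ : ℝ}

theorem gam1_pos (hσ : σ ≠ 0) (hγ1 : γ < 1) : 0 < gam1 σ γ := by
  have : 0 < 1 - γ := by linarith
  unfold gam1
  positivity

theorem gc2_eq (hσ : σ ≠ 0) (hγ1 : γ ≠ 1) : gc2 κ σ r γ = (κ + γ * r) / σ ^ 2 := by
  have : 1 - γ ≠ 0 := sub_ne_zero.mpr hγ1.symm
  unfold gc2 gam2 gam1
  field_simp
  ring

theorem gc3_eq (hσ : σ ≠ 0) (hγ1 : γ ≠ 1) : gc3 κ σ r γ = γ * (κ + r) ^ 2 / σ ^ 4 := by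
  have : 1 - γ ≠ 0 := sub_ne_zero.mpr hγ1.symm
  unfold gc3 gam3 gam1
  field_simp

theorem gc2_sq_sub_gc3 (hσ : σ ≠ 0) (hγ1 : γ ≠ 1) :
    gc2 κ σ r γ ^ 2 - gc3 κ σ r γ = (1 - γ) * (κ ^ 2 - γ * r ^ 2) / σ ^ 4 := by
  rw [gc2_eq hσ hγ1, gc3_eq hσ hγ1]
  field_simp
  ring

theorem gc2_pos (hκ : 0 < κ) (hσ : σ ≠ 0) (hr0 : 0 ≤ r) (hγ0 : 0 ≤ γ) (hγ1 : γ ≠ 1) :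
    0 < gc2 κ σ r γ := by
  rw [gc2_eq hσ hγ1]
  positivity

theorem gc2_sq_sub_gc3_pos (hκ : 0 < κ) (hσ : σ ≠ 0) (hr0 : 0 ≤ r) (hrκ : r ≤ κ)
    (hγ0 : 0 ≤ γ) (hγ1 : γ < 1) : 0 < gc2 κ σ r γ ^ 2 - gc3 κ σ r γ := by
  have hγr : γ * r ^ 2 < κ ^ 2 :=
    calc γ * r ^ 2 ≤ γ * κ ^ 2 := by gcongr
      _ < κ ^ 2 := by nlinarith [pow_pos hκ 2]
  have : 0 < 1 - γ := by linarith
  rw [gc2_sq_sub_gc3 hσ hγ1.ne]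
  have : 0 < κ ^ 2 - γ * r ^ 2 := by linarith
  positivity

theorem gam2_eq_gam1_mul_gc2 (hσ : σ ≠ 0) (hγ1 : γ < 1) :
    gam2 κ σ r γ = gam1 σ γ * gc2 κ σ r γ :=
  (mul_div_cancel₀ _ (gam1_pos hσ hγ1).ne').symm

theorem gam3_eq_gam1_mul (hσ : σ ≠ 0) (hγ1 : γ < 1) (hdisc : 0 ≤ gc2 κ σ r γ ^ 2 - gc3 κ σ r γ) :
    gam3 κ σ r γ = gam1 σ γ * (gc2 κ σ r γ ^ 2 - theta κ σ r γ ^ 2) := by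
  rw [theta, Real.sq_sqrt hdisc, sub_sub_cancel, gc3, mul_div_cancel₀ _ (gam1_pos hσ hγ1).ne']

end Parameters

theorem g_solves_riccati_general (κ σ r γ T : ℝ)
    (hκ : 0 < κ) (hσ : 0 < σ) (hr0 : 0 ≤ r) (hrκ : r ≤ κ)
    (hγ0 : 0 < γ) (hγ1 : γ < 1) :
    (∀ t ∈ Set.Icc (0 : ℝ) T,
      HasDerivAt (fun t' => gfun κ σ r γ T t')
        (2 * gam2 κ σ r γ * gfun κ σ r γ T t - gam1 σ γ * gfun κ σ r γ T t ^ 2 -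
          gam3 κ σ r γ) t) ∧
    gfun κ σ r γ T T = 0 := by
  have hc := gam1_pos hσ.ne' hγ1
  have ha := gc2_pos hκ hσ.ne' hr0 hγ0.le hγ1.ne
  have hdisc := gc2_sq_sub_gc3_pos hκ hσ.ne' hr0 hrκ hγ0.le hγ1
  have hθ : 0 < theta κ σ r γ := Real.sqrt_pos.mpr hdisc
  rw [gfun_eq_riccatiSol]
  refine ⟨fun t ht => ?_, riccatiSol_self hθ.ne'⟩
  rw [gam2_eq_gam1_mul_gc2 hσ.ne' hγ1, gam3_eq_gam1_mul hσ.ne' hγ1 hdisc.le]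
  exact hasDerivAt_riccatiSol (riccatiDenom_pos hc.le hθ (by linarith) ht.2).ne'

/-- `g` is differentiable on `[0,T]`, solves the Riccati equation
`g'(t) − 2γ₂ g(t) + γ₁ g(t)² + γ₃ = 0` there, and `g(T) = 0`. -/
theorem g_solves_riccati (κ σ r γ ϖ T : ℝ)
    (hκ : 0 < κ) (hσ : 0 < σ) (hr0 : 0 ≤ r) (hrκ : r ≤ κ)
    (hγ0 : 0 < γ) (hγ1 : γ < 1) (hϖ : 0 < ϖ) (hT : 0 < T) :
    (∀ t ∈ Set.Icc (0 : ℝ) T,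
      HasDerivAt (fun t' => gfun κ σ r γ T t')
        (2 * gam2 κ σ r γ * gfun κ σ r γ T t - gam1 σ γ * gfun κ σ r γ T t ^ 2 -
          gam3 κ σ r γ) t) ∧
    gfun κ σ r γ T T = 0 :=
  g_solves_riccati_general κ σ r γ T hκ hσ hr0 hrκ hγ0 hγ1
end
end

section
/- Suppose g : [0,T] → ℝ is differentiable, satisfies g'(t) − 2γ₂ g(t) + γ₁ g(t)² + γ₃ = 0 on [0,T] with g(T) = 0, and let g₁(t) = γ₁ g(t) − γ₂. Suppose Y : ℝ × [0,T] → ℝ is twice continuously differentiable in s and continuously differentiable in t, satisfies Y(s,T) = 0 for all s, and solves Y_t(s,t) + (σ²/2) Y_ss(s,t) + s g₁(t) Y_s(s,t) + Ψ_Y(s,t) = 0 on ℝ × [0,T]. Define z(x,s,t) = ϖ x^γ exp(s² g(t)/2 + Y(s,t)) for x > 0. Then z_xx(x,s,t) < 0 and z solves the HJB partial differential equation: z_t + (σ² z_xs − κ₁ s z_x)²/(2 σ² |z_xx|) + (σ²/2) z_ss + r x z_x − κ s z_s + (1−γ)(z_x/γ)^{γ/(γ−1)} = 0 for all x > 0,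 s ∈ ℝ, t ∈ [0,T], with terminal condition z(x,s,T) = ϖ x^γ. -/
open Real MeasureTheory Set Filter

noncomputable section

/-! For `z = ϖ x^γ e^E` every term of the HJB operator is `z` times an expression in the
derivatives of `E`: the powers of `x` match because `z_x²/z_xx` and `(z_x/γ)^{γ/(γ-1)}` are
homogeneous of degree `γ` in `x`, like `z`. For `E = s²g/2 + Y` the resulting equation for `E`
has an `s²`-coefficient which is the Riccati equation for `g`, and what remains is the
semilinear equation for `Y`. Concavity in `x` comes from `0 < γ < 1`, and the terminal
condition from `g(T) = 0` and `Y(·,T) = 0`. -/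

theorem deriv_mul_rpow_mul (a γ b : ℝ) :
    deriv (fun x => a * x ^ γ * b) = fun x => a * (γ * x ^ (γ - 1)) * b := by
  rw [deriv_mul_const_field', deriv_const_mul_field', deriv_rpow_const']

theorem deriv_deriv_mul_rpow_mul (a γ b : ℝ) :
    deriv (deriv fun x => a * x ^ γ * b) =
      fun x => a * (γ * ((γ - 1) * x ^ (γ - 1 - 1))) * b := by
  rw [deriv_mul_rpow_mul, deriv_mul_const_field', deriv_const_mul_field',
    deriv_const_mul_field', deriv_rpow_const']

theorem deriv_deriv_mul_rpow_mul_neg {a γ b x : ℝ} (ha : 0 < a) (hb : 0 < b) (hx : 0 < x)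
    (hγ0 : 0 < γ) (hγ1 : γ < 1) :
    deriv (deriv fun x => a * x ^ γ * b) x < 0 := by
  rw [deriv_deriv_mul_rpow_mul]
  have : 0 < a * (γ * x ^ (γ - 1 - 1)) * b := by positivity
  nlinarith

theorem deriv_deriv_const_mul_exp {f f' : ℝ → ℝ} {f'' s : ℝ} (c : ℝ)
    (hf : ∀ s, HasDerivAt f (f' s) s) (hf' : HasDerivAt f' f'' s) :
    deriv (deriv fun s => c * exp (f s)) s = c * (exp (f s) * (f' s ^ 2 + f'')) := by
  have hd : deriv (fun s => c * exp (f s)) = fun s => c * (exp (f s) * f' s) :=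
    funext fun s => ((hf s).exp.const_mul c).deriv
  rw [hd]
  exact (((hf s).exp.mul hf').const_mul c).deriv.trans (by ring)

section QuadraticAnsatz

variable {g : ℝ → ℝ} {Y : ℝ → ℝ → ℝ} {s t : ℝ}

theorem hasDerivAt_ansatz_state (hY : DifferentiableAt ℝ (fun s => Y s t) s) :
    HasDerivAt (fun s => s ^ 2 * g t / 2 + Y s t) (s * g t + deriv (fun s => Y s t) s) s := by
  refine ((((hasDerivAt_pow 2 s).mul_const (g t)).div_const 2).add
    hY.hasDerivAt).congr_deriv ?_
  push_cast
  ring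

theorem hasDerivAt_ansatz_state_deriv
    (hY : DifferentiableAt ℝ (fun s => deriv (fun s => Y s t) s) s) :
    HasDerivAt (fun s => s * g t + deriv (fun s => Y s t) s)
      (g t + deriv (fun s => deriv (fun s => Y s t) s) s) s :=
  (hasDerivAt_mul_const (g t)).add hY.hasDerivAt

theorem hasDerivAt_ansatz_time {g' : ℝ} (hg : HasDerivAt g g' t)
    (hY : DifferentiableAt ℝ (fun t => Y s t) t) :
    HasDerivAt (fun t => s ^ 2 * g t / 2 + Y s t) (s ^ 2 * g' / 2 + deriv (fun t => Y s t) t) t :=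
  ((hg.const_mul (s ^ 2)).div_const 2).add hY.hasDerivAt

end QuadraticAnsatz

/-- The HJB equation divided by `z = ϖ x^γ e^E`, in terms of `E` and its derivatives. -/
def reducedHJB (κ σ r γ ϖ s E Es Ess Et : ℝ) : ℝ :=
  Et + γ * (σ ^ 2 * Es - (κ + r) * s) ^ 2 / (2 * σ ^ 2 * (1 - γ)) + σ ^ 2 / 2 * (Es ^ 2 + Ess) +
    r * γ - κ * s * Es + (1 - γ) * ϖ ^ (1 / (γ - 1)) * exp (-E / (1 - γ))

theorem rpow_marginal_power_exp {ϖ γ x : ℝ} (hϖ : 0 < ϖ) (hx : 0 < x) (hγ0 : γ ≠ 0)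
    (hγ1 : γ ≠ 1) (E : ℝ) :
    (ϖ * (γ * x ^ (γ - 1)) * exp E / γ) ^ (γ / (γ - 1)) =
      ϖ * x ^ γ * exp E * (ϖ ^ (1 / (γ - 1)) * exp (-E / (1 - γ))) := by
  have hγ1' : γ - 1 ≠ 0 := sub_ne_zero.mpr hγ1
  have hbase : ϖ * (γ * x ^ (γ - 1)) * exp E / γ = ϖ * x ^ (γ - 1) * exp E := by
    field_simp
  have hϖ' : ϖ ^ (γ / (γ - 1)) = ϖ * ϖ ^ (1 / (γ - 1)) := by
    rw [show γ / (γ - 1) = 1 + 1 / (γ - 1) by field_simp; ring, rpow_add hϖ, rpow_one]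
  have hx' : (x ^ (γ - 1)) ^ (γ / (γ - 1)) = x ^ γ := by
    rw [← rpow_mul hx.le]
    congr 1
    field_simp
  have hE : exp E ^ (γ / (γ - 1)) = exp E * exp (-E / (1 - γ)) := by
    rw [← exp_mul, ← exp_add]
    congr 1
    field_simp
    ring
  rw [hbase, mul_rpow (by positivity) (exp_pos E).le, mul_rpow hϖ.le (by positivity), hϖ', hx',
    hE]
  ring

theorem hjb_power_exp_eq {κ σ r γ ϖ x : ℝ} (hσ : σ ≠ 0) (hγ0 : 0 < γ) (hγ1 : γ < 1)
    (hϖ : 0 < ϖ) (hx : 0 < x) (s E Es Ess Et : ℝ) :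
    ϖ * x ^ γ * (exp E * Et) +
        (σ ^ 2 * (ϖ * (γ * x ^ (γ - 1)) * (exp E * Es)) -
            (κ + r) * s * (ϖ * (γ * x ^ (γ - 1)) * exp E)) ^ 2 /
          (2 * σ ^ 2 * |ϖ * (γ * ((γ - 1) * x ^ (γ - 1 - 1))) * exp E|) +
        σ ^ 2 / 2 * (ϖ * x ^ γ * (exp E * (Es ^ 2 + Ess))) +
        r * x * (ϖ * (γ * x ^ (γ - 1)) * exp E) - κ * s * (ϖ * x ^ γ * (exp E * Es)) +
        (1 - γ) * (ϖ * (γ * x ^ (γ - 1)) * exp E / γ) ^ (γ / (γ - 1)) =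
      ϖ * x ^ γ * exp E * reducedHJB κ σ r γ ϖ s E Es Ess Et := by
  have hneg : ϖ * (γ * ((γ - 1) * x ^ (γ - 1 - 1))) * exp E < 0 := by
    simpa only [deriv_deriv_mul_rpow_mul] using
      deriv_deriv_mul_rpow_mul_neg hϖ (exp_pos E) hx hγ0 hγ1
  have hγ1' : γ - 1 ≠ 0 := by linarith
  have h1γ : 1 - γ ≠ 0 := by linarith
  have hx1 : x ^ (γ - 1) = x ^ γ / x := by rw [rpow_sub hx, rpow_one]
  have hx2 : x ^ (γ - 1 - 1) = x ^ γ / x / x := by rw [rpow_sub hx, rpow_one, hx1]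
  rw [abs_of_neg hneg, rpow_marginal_power_exp hϖ hx hγ0.ne' (by linarith), reducedHJB, hx2,
    hx1]
  field_simp
  ring

theorem reducedHJB_quadratic_ansatz {κ σ r γ : ℝ} (hσ : σ ≠ 0) (hγ1 : γ ≠ 1)
    (ϖ s G Y Ys Yss Yt : ℝ) :
    reducedHJB κ σ r γ ϖ s (s ^ 2 * G / 2 + Y) (s * G + Ys) (G + Yss)
        (s ^ 2 * (2 * gam2 κ σ r γ * G - gam1 σ γ * G ^ 2 - gam3 κ σ r γ) / 2 + Yt) =
      Yt + σ ^ 2 / 2 * Yss + s * (gam1 σ γ * G - gam2 κ σ r γ) * Ys +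
        (σ ^ 2 * Ys ^ 2 / (2 * (1 - γ)) + σ ^ 2 * G / 2 + r * γ +
          (1 - γ) * ϖ ^ (1 / (γ - 1)) * exp (-(s ^ 2 * G / 2 + Y) / (1 - γ))) := by
  have h1γ : 1 - γ ≠ 0 := sub_ne_zero.mpr hγ1.symm
  simp only [reducedHJB, gam1, gam2, gam3]
  field_simp
  ring

theorem z_solves_HJB_general (κ σ r γ ϖ T : ℝ)
    (hσ : 0 < σ) (hγ0 : 0 < γ) (hγ1 : γ < 1) (hϖ : 0 < ϖ)
    (g : ℝ → ℝ) (Y : ℝ → ℝ → ℝ)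
    (hg : ∀ t ∈ Set.Icc (0 : ℝ) T,
      HasDerivAt g (2 * gam2 κ σ r γ * g t - gam1 σ γ * g t ^ 2 - gam3 κ σ r γ) t)
    (hgT : g T = 0)
    (hY1 : ∀ t ∈ Set.Icc (0 : ℝ) T, ∀ s : ℝ, DifferentiableAt ℝ (fun s' => Y s' t) s)
    (hY2 : ∀ t ∈ Set.Icc (0 : ℝ) T, ∀ s : ℝ,
      DifferentiableAt ℝ (fun s' => deriv (fun s'' => Y s'' t) s') s)
    (hYt : ∀ s : ℝ, ∀ t ∈ Set.Icc (0 : ℝ) T, DifferentiableAt ℝ (fun t' => Y s t') t)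
    (hYT : ∀ s : ℝ, Y s T = 0)
    (hPDE : ∀ s : ℝ, ∀ t ∈ Set.Icc (0 : ℝ) T,
      deriv (fun t' => Y s t') t +
          σ ^ 2 / 2 * deriv (fun s' => deriv (fun s'' => Y s'' t) s') s +
          s * (gam1 σ γ * g t - gam2 κ σ r γ) * deriv (fun s' => Y s' t) s +
          (σ ^ 2 * (deriv (fun s' => Y s' t) s) ^ 2 / (2 * (1 - γ)) + σ ^ 2 * g t / 2 +
            r * γ +
            (1 - γ) * ϖ ^ (1 / (γ - 1)) *
              Real.exp (-(s ^ 2 * g t / 2 + Y s t) / (1 - γ))) = 0) :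
    let z : ℝ → ℝ → ℝ → ℝ := fun x s t =>
      ϖ * x ^ γ * Real.exp (s ^ 2 * g t / 2 + Y s t)
    let zx : ℝ → ℝ → ℝ → ℝ := fun x s t => deriv (fun x' => z x' s t) x
    let zxx : ℝ → ℝ → ℝ → ℝ := fun x s t => deriv (fun x' => zx x' s t) x
    let zs : ℝ → ℝ → ℝ → ℝ := fun x s t => deriv (fun s' => z x s' t) s
    let zss : ℝ → ℝ → ℝ → ℝ := fun x s t => deriv (fun s' => zs x s' t) s
    let zxs : ℝ → ℝ → ℝ → ℝ := fun x s t => deriv (fun s' => zx x s' t) s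
    let zt : ℝ → ℝ → ℝ → ℝ := fun x s t => deriv (fun t' => z x s t') t
    ∀ x : ℝ, 0 < x → ∀ s : ℝ, ∀ t ∈ Set.Icc (0 : ℝ) T,
      zxx x s t < 0 ∧
      zt x s t +
          (σ ^ 2 * zxs x s t - (κ + r) * s * zx x s t) ^ 2 /
            (2 * σ ^ 2 * |zxx x s t|) +
          σ ^ 2 / 2 * zss x s t + r * x * zx x s t - κ * s * zs x s t +
          (1 - γ) * (zx x s t / γ) ^ (γ / (γ - 1)) = 0 ∧
      z x s T = ϖ * x ^ γ := by
  intro z zx zxx zs zss zxs zt x hx s t ht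
  have hE (s : ℝ) := hasDerivAt_ansatz_state (g := g) (hY1 t ht s)
  have hzx (s : ℝ) : zx x s t = ϖ * (γ * x ^ (γ - 1)) * exp (s ^ 2 * g t / 2 + Y s t) :=
    congrFun (deriv_mul_rpow_mul ..) x
  have hzxx : zxx x s t =
      ϖ * (γ * ((γ - 1) * x ^ (γ - 1 - 1))) * exp (s ^ 2 * g t / 2 + Y s t) :=
    congrFun (deriv_deriv_mul_rpow_mul ..) x
  have hzs : zs x s t = ϖ * x ^ γ * (exp (s ^ 2 * g t / 2 + Y s t) *
      (s * g t + deriv (fun s => Y s t) s)) := ((hE s).exp.const_mul _).deriv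
  have hzss : zss x s t = ϖ * x ^ γ * (exp (s ^ 2 * g t / 2 + Y s t) *
      ((s * g t + deriv (fun s => Y s t) s) ^ 2 +
        (g t + deriv (fun s => deriv (fun s => Y s t) s) s))) :=
    deriv_deriv_const_mul_exp _ hE (hasDerivAt_ansatz_state_deriv (hY2 t ht s))
  have hzxs : zxs x s t = ϖ * (γ * x ^ (γ - 1)) * (exp (s ^ 2 * g t / 2 + Y s t) *
      (s * g t + deriv (fun s => Y s t) s)) := by
    simp only [zxs, hzx]
    exact ((hE s).exp.const_mul _).deriv
  have hzt : zt x s t = ϖ * x ^ γ * (exp (s ^ 2 * g t / 2 + Y s t) *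
      (s ^ 2 * (2 * gam2 κ σ r γ * g t - gam1 σ γ * g t ^ 2 - gam3 κ σ r γ) / 2 +
        deriv (fun t => Y s t) t)) :=
    ((hasDerivAt_ansatz_time (hg t ht) (hYt s t ht)).exp.const_mul _).deriv
  refine ⟨deriv_deriv_mul_rpow_mul_neg hϖ (exp_pos _) hx hγ0 hγ1, ?_, ?_⟩
  · rw [hzt, hzxs, hzx, hzxx, hzss, hzs, hjb_power_exp_eq hσ.ne' hγ0 hγ1 hϖ hx,
      reducedHJB_quadratic_ansatz hσ.ne' hγ1.ne, hPDE s t ht, mul_zero]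
  · simp [z, hgT, hYT]

/-- if `g` solves the Riccati equation with `g(T) = 0` and `Y` is a classical
solution of the semilinear PDE `Y_t + (σ²/2)Y_ss + s g₁(t) Y_s + Ψ_Y = 0`, `Y(s,T) = 0`,
then `z(x,s,t) = ϖ x^γ exp(s²g(t)/2 + Y(s,t))` has `z_xx < 0` and solves the HJB equation
with terminal condition `z(x,s,T) = ϖ x^γ`. -/
theorem z_solves_HJB (κ σ r γ ϖ T : ℝ)
    (hκ : 0 < κ) (hσ : 0 < σ) (hr0 : 0 ≤ r) (hrκ : r ≤ κ)
    (hγ0 : 0 < γ) (hγ1 : γ < 1) (hϖ : 0 < ϖ) (hT : 0 < T)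
    (g : ℝ → ℝ) (Y : ℝ → ℝ → ℝ)
    (hg : ∀ t ∈ Set.Icc (0 : ℝ) T,
      HasDerivAt g (2 * gam2 κ σ r γ * g t - gam1 σ γ * g t ^ 2 - gam3 κ σ r γ) t)
    (hgT : g T = 0)
    (hY1 : ∀ t ∈ Set.Icc (0 : ℝ) T, ∀ s : ℝ, DifferentiableAt ℝ (fun s' => Y s' t) s)
    (hY2 : ∀ t ∈ Set.Icc (0 : ℝ) T, ∀ s : ℝ,
      DifferentiableAt ℝ (fun s' => deriv (fun s'' => Y s'' t) s') s)
    (hY1c : ContinuousOn (fun p : ℝ × ℝ => deriv (fun s' => Y s' p.2) p.1)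
      (Set.univ ×ˢ Set.Icc 0 T))
    (hY2c : ContinuousOn
      (fun p : ℝ × ℝ => deriv (fun s' => deriv (fun s'' => Y s'' p.2) s') p.1)
      (Set.univ ×ˢ Set.Icc 0 T))
    (hYt : ∀ s : ℝ, ∀ t ∈ Set.Icc (0 : ℝ) T, DifferentiableAt ℝ (fun t' => Y s t') t)
    (hYtc : ContinuousOn (fun p : ℝ × ℝ => deriv (fun t' => Y p.1 t') p.2)
      (Set.univ ×ˢ Set.Icc 0 T))
    (hYT : ∀ s : ℝ, Y s T = 0)
    (hPDE : ∀ s : ℝ, ∀ t ∈ Set.Icc (0 : ℝ) T,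
      deriv (fun t' => Y s t') t +
          σ ^ 2 / 2 * deriv (fun s' => deriv (fun s'' => Y s'' t) s') s +
          s * (gam1 σ γ * g t - gam2 κ σ r γ) * deriv (fun s' => Y s' t) s +
          (σ ^ 2 * (deriv (fun s' => Y s' t) s) ^ 2 / (2 * (1 - γ)) + σ ^ 2 * g t / 2 +
            r * γ +
            (1 - γ) * ϖ ^ (1 / (γ - 1)) *
              Real.exp (-(s ^ 2 * g t / 2 + Y s t) / (1 - γ))) = 0) :
    let z : ℝ → ℝ → ℝ → ℝ := fun x s t =>
      ϖ * x ^ γ * Real.exp (s ^ 2 * g t / 2 + Y s t)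
    let zx : ℝ → ℝ → ℝ → ℝ := fun x s t => deriv (fun x' => z x' s t) x
    let zxx : ℝ → ℝ → ℝ → ℝ := fun x s t => deriv (fun x' => zx x' s t) x
    let zs : ℝ → ℝ → ℝ → ℝ := fun x s t => deriv (fun s' => z x s' t) s
    let zss : ℝ → ℝ → ℝ → ℝ := fun x s t => deriv (fun s' => zs x s' t) s
    let zxs : ℝ → ℝ → ℝ → ℝ := fun x s t => deriv (fun s' => zx x s' t) s
    let zt : ℝ → ℝ → ℝ → ℝ := fun x s t => deriv (fun t' => z x s t') t
    ∀ x : ℝ, 0 < x → ∀ s : ℝ, ∀ t ∈ Set.Icc (0 : ℝ) T,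
      zxx x s t < 0 ∧
      zt x s t +
          (σ ^ 2 * zxs x s t - (κ + r) * s * zx x s t) ^ 2 /
            (2 * σ ^ 2 * |zxx x s t|) +
          σ ^ 2 / 2 * zss x s t + r * x * zx x s t - κ * s * zs x s t +
          (1 - γ) * (zx x s t / γ) ^ (γ / (γ - 1)) = 0 ∧
      z x s T = ϖ * x ^ γ :=
  z_solves_HJB_general κ σ r γ ϖ T hσ hγ0 hγ1 hϖ g Y hg hgT hY1 hY2 hYt hYT hPDE
end
end
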